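/- Let S = {x_1, ..., x_n} be a gcd-closed set of distinct positive integers and let a be a positive integer. Then the determinant of the n×n matrix [S^a] with (i,j)-entry lcm(x_i, x_j)^a equals Π_{k=1}^n x_k^{2a} β_{a,k}, where β_{a,k} = Σ_{d | x_k, d ∤ x_t for all x_t < x_k in S} ((1/ξ_a) * μ)(d) and (1/ξ_a)(x) = x^{-a}. -/

import Mathlib

/-!
Put `f m = m⁻ᵃ` and `ψ = f * μ`, so that `∑_{d ∣ m} ψ d = f m`. For `d` dividing some element of
the gcd-closed set `S`, let `x_k` be the least element of `S` divisible by `d`; gcd-closure shows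
that `x_k` divides every element of `S` divisible by `d`. Hence the divisors of `x_l ∈ S` are
partitioned by the sets `A_k` of the statement with `x_k ∣ x_l`, and `β_k = ∑_{d ∈ A_k} ψ d`
satisfies `∑_{x_k ∣ x_l} β_k = f x_l`. Taking `x_l = gcd(x_i, x_j)` factors the GCD matrix as
`(f (gcd(x_i, x_j))) = E diag(β) Eᵀ` with `E_{ik} = [x_k ∣ x_i]` unitriangular, and
`lcm(x_i, x_j)ᵃ = x_iᵃ f (gcd(x_i, x_j)) x_jᵃ`.
-/

open ArithmeticFunction Finset Matrix

section MoebiusTransform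

variable {R : Type*} [CommRing R]

def moebiusTransform (f : ℕ → R) (d : ℕ) : R :=
  ∑ e ∈ d.divisors, f e * moebius (d / e)

theorem sum_divisors_moebiusTransform (f : ℕ → R) {m : ℕ} (hm : 0 < m) :
    ∑ d ∈ m.divisors, moebiusTransform f d = f m := by
  refine (sum_eq_iff_sum_mul_moebius_eq (f := moebiusTransform f) (g := f)).mpr ?_ m hm
  intro d _
  rw [Nat.sum_divisorsAntidiagonal' (f := fun c e => (moebius c : R) * f e)]
  exact sum_congr rfl fun e _ => mul_comm _ _

end MoebiusTransform

section GcdClosed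

variable {R : Type*} [CommRing R] {ι : Type*} [Fintype ι] (x : ι → ℕ)

def exclusiveDivisors (k : ι) : Finset ℕ :=
  (x k).divisors.filter fun d => ∀ t, x t < x k → ¬ d ∣ x t

theorem pairwise_disjoint_exclusiveDivisors (hinj : Function.Injective x) :
    Pairwise (Function.onFun Disjoint (exclusiveDivisors x)) := by
  intro k k' hkk'
  rw [Function.onFun, disjoint_left]
  intro d hd hd'
  simp only [exclusiveDivisors, mem_filter, Nat.mem_divisors] at hd hd'
  rcases lt_trichotomy (x k) (x k') with h | h | h
  · exact hd'.2 k h hd.1.1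
  · exact hkk' (hinj h)
  · exact hd.2 k' h hd'.1.1

variable {x}

theorem biUnion_exclusiveDivisors (hpos : ∀ i, 0 < x i)
    (hgcd : ∀ i j, ∃ k, x k = Nat.gcd (x i) (x j)) (l : ι) :
    (univ.filter fun k => x k ∣ x l).biUnion (exclusiveDivisors x) = (x l).divisors := by
  ext d
  simp only [mem_biUnion, mem_filter, mem_univ, true_and, exclusiveDivisors, Nat.mem_divisors]
  constructor
  · rintro ⟨k, hkl, ⟨hdk, -⟩, -⟩
    exact ⟨hdk.trans hkl, (hpos l).ne'⟩
  · rintro ⟨hdl, -⟩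
    obtain ⟨k, hk, hmin⟩ := (univ.filter fun k => x k ∣ x l ∧ d ∣ x k).exists_min_image
      x ⟨l, by simp [hdl]⟩
    obtain ⟨hkl, hdk⟩ := (mem_filter.mp hk).2
    refine ⟨k, hkl, ⟨hdk, (hpos k).ne'⟩, fun t hlt hdt => ?_⟩
    obtain ⟨s, hs⟩ := hgcd t k
    have hsl : x s ∣ x l := (hs ▸ Nat.gcd_dvd_right (x t) (x k)).trans hkl
    have hds : d ∣ x s := hs ▸ Nat.dvd_gcd hdt hdk
    have hst : x s ≤ x t := Nat.le_of_dvd (hpos t) (hs ▸ Nat.gcd_dvd_left (x t) (x k))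
    have hks := hmin s (by simp [hsl, hds])
    omega

theorem sum_sum_exclusiveDivisors {M : Type*} [AddCommMonoid M] (g : ℕ → M)
    (hinj : Function.Injective x) (hpos : ∀ i, 0 < x i)
    (hgcd : ∀ i j, ∃ k, x k = Nat.gcd (x i) (x j)) (l : ι) :
    ∑ k ∈ univ.filter (fun k => x k ∣ x l), ∑ d ∈ exclusiveDivisors x k, g d =
      ∑ d ∈ (x l).divisors, g d := by
  rw [← sum_biUnion ((pairwise_disjoint_exclusiveDivisors x hinj).set_pairwise _),
    biUnion_exclusiveDivisors hpos hgcd]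

variable (x) in
def gcdWeight (f : ℕ → R) (k : ι) : R :=
  ∑ d ∈ exclusiveDivisors x k, moebiusTransform f d

theorem sum_gcdWeight_of_dvd (f : ℕ → R) (hinj : Function.Injective x) (hpos : ∀ i, 0 < x i)
    (hgcd : ∀ i j, ∃ k, x k = Nat.gcd (x i) (x j)) (l : ι) :
    ∑ k ∈ univ.filter (fun k => x k ∣ x l), gcdWeight x f k = f (x l) := by
  simp only [gcdWeight]
  rw [sum_sum_exclusiveDivisors _ hinj hpos hgcd,
    sum_divisors_moebiusTransform f (hpos l)]

variable (R x) in
def divisibilityMatrix : Matrix ι ι R :=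
  of fun i k => if x k ∣ x i then 1 else 0

variable [DecidableEq ι]

theorem det_divisibilityMatrix (hinj : Function.Injective x)
    (hpos : ∀ i, 0 < x i) : (divisibilityMatrix R x).det = 1 := by
  let _ : LinearOrder ι := LinearOrder.lift' x hinj
  have hlower : (divisibilityMatrix R x).IsLowerTriangular := fun i k (hik : i < k) => by
    simp only [divisibilityMatrix, of_apply, ite_eq_right_iff]
    intro hdvd
    exact absurd (Nat.le_of_dvd (hpos i) hdvd) (not_le.mpr hik)
  rw [det_of_isLowerTriangular _ hlower]
  simp [divisibilityMatrix]

theorem gcd_matrix_eq (f : ℕ → R) (hinj : Function.Injective x) (hpos : ∀ i, 0 < x i)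
    (hgcd : ∀ i j, ∃ k, x k = Nat.gcd (x i) (x j)) :
    of (fun i j => f (Nat.gcd (x i) (x j))) =
      divisibilityMatrix R x * diagonal (gcdWeight x f) * (divisibilityMatrix R x)ᵀ := by
  ext i j
  obtain ⟨l, hl⟩ := hgcd i j
  rw [of_apply, ← hl, ← sum_gcdWeight_of_dvd f hinj hpos hgcd l, sum_filter, Matrix.mul_apply]
  refine sum_congr rfl fun k _ => ?_
  simp only [mul_diagonal, transpose_apply, divisibilityMatrix, of_apply, hl, Nat.dvd_gcd_iff]
  split_ifs <;> simp_all

theorem det_gcd_matrix (f : ℕ → R) (hinj : Function.Injective x)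
    (hpos : ∀ i, 0 < x i) (hgcd : ∀ i j, ∃ k, x k = Nat.gcd (x i) (x j)) :
    (of fun i j => f (Nat.gcd (x i) (x j))).det = ∏ k, gcdWeight x f k := by
  rw [gcd_matrix_eq f hinj hpos hgcd, det_mul, det_mul, det_transpose,
    det_divisibilityMatrix hinj hpos, det_diagonal, one_mul, mul_one]

theorem lcm_pow_matrix_eq {K : Type*} [Field K] [CharZero K] (a : ℕ) (hpos : ∀ i, 0 < x i) :
    of (fun i j => (Nat.lcm (x i) (x j) : K) ^ a) =
      diagonal (fun i => (x i : K) ^ a) * of (fun i j => ((Nat.gcd (x i) (x j) : K) ^ a)⁻¹) *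
        diagonal (fun i => (x i : K) ^ a) := by
  ext i j
  have hgcd_ne : (Nat.gcd (x i) (x j) : K) ≠ 0 := by
    exact_mod_cast (Nat.gcd_pos_of_pos_left _ (hpos i)).ne'
  have hlcm_mul_gcd : (Nat.lcm (x i) (x j) : K) * Nat.gcd (x i) (x j) = x i * x j := by
    rw [mul_comm]
    exact_mod_cast Nat.gcd_mul_lcm (x i) (x j)
  simp only [of_apply, mul_diagonal, diagonal_mul]
  field_simp
  rw [← mul_pow, ← mul_pow, hlcm_mul_gcd]

end GcdClosed

theorem stmt_5_general (n : ℕ) (a : ℕ)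
    (x : Fin n → ℕ) (hinj : Function.Injective x) (hpos : ∀ i, 0 < x i)
    (hgcd : ∀ i j, ∃ k, x k = Nat.gcd (x i) (x j)) :
    (Matrix.of fun i j : Fin n => ((Nat.lcm (x i) (x j) : ℚ)) ^ a).det =
      ∏ k : Fin n, (x k : ℚ) ^ (2 * a) *
        ∑ d ∈ (x k).divisors.filter (fun d => ∀ t, x t < x k → ¬ d ∣ x t),
          ∑ e ∈ d.divisors, ((e : ℚ) ^ a)⁻¹ * (ArithmeticFunction.moebius (d / e)) := by
  rw [lcm_pow_matrix_eq a hpos, det_mul, det_mul,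
    det_gcd_matrix (fun m => ((m : ℚ) ^ a)⁻¹) hinj hpos hgcd, det_diagonal,
    ← prod_mul_distrib, ← prod_mul_distrib]
  refine prod_congr rfl fun k _ => ?_
  rw [two_mul, pow_add, mul_right_comm]
  congr 1
  -- the two filters differ only in their `Decidable` instances
  unfold gcdWeight exclusiveDivisors moebiusTransform
  congr

theorem stmt_5 (n : ℕ) (hn : 0 < n) (a : ℕ) (ha : 0 < a)
    (x : Fin n → ℕ) (hinj : Function.Injective x) (hpos : ∀ i, 0 < x i)
    (hgcd : ∀ i j, ∃ k, x k = Nat.gcd (x i) (x j)) :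
    (Matrix.of fun i j : Fin n => ((Nat.lcm (x i) (x j) : ℚ)) ^ a).det =
      ∏ k : Fin n, (x k : ℚ) ^ (2 * a) *
        ∑ d ∈ (x k).divisors.filter (fun d => ∀ t, x t < x k → ¬ d ∣ x t),
          ∑ e ∈ d.divisors, ((e : ℚ) ^ a)⁻¹ * (ArithmeticFunction.moebius (d / e)) :=
  stmt_5_general n a x hinj hpos hgcd
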